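/- Let L and K be MPNN layers of types d_L → r_L and d_K → r_K respectively, let X_L ⊆ ℝ^{d_L} and X_K ⊆ ℝ^{d_K} be bounded, let p be a natural number, and let X = X_L × X_K ⊆ ℝ^{d_L + d_K}. Then there exists a single MPNN layer of type (d_L + d_K) → (r_L + r_K) that is equivalent to the parallel composition L ∥ K over 𝔾_p and X. -/

import Mathlib

open scoped BigOperators

/-- A finite graph: nodes `Fin n`, with a symmetric, irreflexive adjacency relation. -/
structure MPGraph where
  n : ℕ
  adj : Fin n → Fin n → Bool
  symm : ∀ u v, adj u v = adj v u
  irrefl : ∀ v, adj v v = false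

namespace MPGraph

/-- The set of neighbors of `v` in `G`. -/
def neighbors (G : MPGraph) (v : Fin G.n) : Finset (Fin G.n) :=
  Finset.univ.filter fun u => G.adj v u

/-- The degree of a node. -/
def degree (G : MPGraph) (v : Fin G.n) : ℕ := (G.neighbors v).card

/-- `G` has degree at most `p` (i.e., `G ∈ 𝔾_p`). -/
def DegreeLE (G : MPGraph) (p : ℕ) : Prop := ∀ v, G.degree v ≤ p

end MPGraph

/-- The rectified linear unit. -/
noncomputable def ReLU (x : ℝ) : ℝ := max 0 x

/-- An MPNN layer of type `d → r`: matrices `W₁, W₂ ∈ ℝ^{r×d}`, bias `b ∈ ℝ^r`,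
and a continuous activation function `σ`. -/
structure Layer (d r : ℕ) where
  W₁ : Matrix (Fin r) (Fin d) ℝ
  W₂ : Matrix (Fin r) (Fin d) ℝ
  b : Fin r → ℝ
  σ : ℝ → ℝ
  hσ : Continuous σ

namespace Layer

/-- The GFMT defined by a layer:
`L(G)(χ)(v) = σ(W₁ χ(v) + W₂ Σ_{u ∈ N_G(v)} χ(u) + b)`, componentwise. -/
noncomputable def eval {d r : ℕ} (L : Layer d r) (G : MPGraph)
    (χ : Fin G.n → Fin d → ℝ) (v : Fin G.n) : Fin r → ℝ :=
  fun i => L.σ (L.W₁.mulVec (χ v) i + L.W₂.mulVec (∑ u ∈ G.neighbors v, χ u) i + L.b i)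

end Layer

/-- An MPNN: a nonempty sequence of layers with matching arities. -/
inductive MPNN : ℕ → ℕ → Type where
  | single {d r : ℕ} : Layer d r → MPNN d r
  | cons {d m r : ℕ} : Layer d m → MPNN m r → MPNN d r

namespace MPNN

/-- The GFMT defined by an MPNN: the sequential composition of its layers. -/
noncomputable def eval : {d r : ℕ} → MPNN d r → (G : MPGraph) →
    (Fin G.n → Fin d → ℝ) → (Fin G.n → Fin r → ℝ)
  | _, _, .single L, G, χ => L.eval G χ
  | _, _, .cons L N, G, χ => N.eval G (L.eval G χ)

/-- A ReLU-MPNN: every layer uses ReLU, except that the last layer may use the identity. -/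
def IsReLU : {d r : ℕ} → MPNN d r → Prop
  | _, _, .single L => L.σ = ReLU ∨ L.σ = id
  | _, _, .cons L N => L.σ = ReLU ∧ N.IsReLU

/-- The set of activation functions used in the layers of an MPNN. -/
def activations : {d r : ℕ} → MPNN d r → Set (ℝ → ℝ)
  | _, _, .single L => {L.σ}
  | _, _, .cons L N => insert L.σ N.activations

/-- The number of layers of an MPNN. -/
def numLayers : {d r : ℕ} → MPNN d r → ℕ
  | _, _, .single _ => 1
  | _, _, .cons _ N => N.numLayers + 1

end MPNN

/-- MPLang expressions: `e ::= 1 | P_i | a·e | e + e | f(e) | ◇e`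
with `f : ℝ → ℝ` continuous. -/
inductive MPLang : Type where
  | one : MPLang
  | proj : ℕ → MPLang
  | scale : ℝ → MPLang → MPLang
  | add : MPLang → MPLang → MPLang
  | app : (f : ℝ → ℝ) → Continuous f → MPLang → MPLang
  | diamond : MPLang → MPLang

namespace MPLang

/-- `e` is appropriate for input arity `d`: every `P_i` has `1 ≤ i ≤ d`. -/
def Appropriate (d : ℕ) : MPLang → Prop
  | .one => True
  | .proj i => 1 ≤ i ∧ i ≤ d
  | .scale _ e => e.Appropriate d
  | .add e₁ e₂ => e₁.Appropriate d ∧ e₂.Appropriate d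
  | .app _ _ e => e.Appropriate d
  | .diamond e => e.Appropriate d

/-- Semantics of MPLang expressions (the `P_i` are 1-based; out-of-range
projections, which cannot occur in expressions appropriate for `d`, yield 0). -/
noncomputable def eval (d : ℕ) : MPLang → (G : MPGraph) →
    (Fin G.n → Fin d → ℝ) → Fin G.n → ℝ
  | .one, _, _, _ => 1
  | .proj i, _, χ, v => if h : i - 1 < d then χ v ⟨i - 1, h⟩ else 0
  | .scale a e, G, χ, v => a * e.eval d G χ v
  | .add e₁ e₂, G, χ, v => e₁.eval d G χ v + e₂.eval d G χ v
  | .app f _ e, G, χ, v => f (e.eval d G χ v)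
  | .diamond e, G, χ, v => ∑ u ∈ G.neighbors v, e.eval d G χ u

/-- All function applications in the expression apply functions from `F`. -/
def AppsIn (F : Set (ℝ → ℝ)) : MPLang → Prop
  | .one => True
  | .proj _ => True
  | .scale _ e => e.AppsIn F
  | .add e₁ e₂ => e₁.AppsIn F ∧ e₂.AppsIn F
  | .app f _ e => f ∈ F ∧ e.AppsIn F
  | .diamond e => e.AppsIn F

/-- A ReLU-MPLang expression: all function applications apply ReLU. -/
def IsReLU (e : MPLang) : Prop := e.AppsIn {ReLU}

end MPLang

/-! Shift the preactivations of `L` up by a constant `c` and those of `K` down by `c`.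
On inputs from bounded sets, over graphs of degree at most `p`, all preactivations are bounded,
so for `c` large the two blocks land in the disjoint half-lines `[1, ∞)` and `(-∞, -1]`.
A single continuous activation that acts as `σ_L (· - c)` on the first half-line and as
`σ_K (· + c)` on the second (interpolating linearly on `[-1, 1]`) then computes both layers
at once. -/

noncomputable def glue (f g : ℝ → ℝ) (c : ℝ) : ℝ → ℝ := fun x =>
  (1 + min 1 (max (-1) x)) / 2 * f (max x 1 - c) +
  (1 - min 1 (max (-1) x)) / 2 * g (min x (-1) + c)

lemma continuous_glue {f g : ℝ → ℝ} (hf : Continuous f) (hg : Continuous g) (c : ℝ) :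
    Continuous (glue f g c) := by
  unfold glue; fun_prop

lemma glue_of_one_le {f g : ℝ → ℝ} {c x : ℝ} (h : 1 ≤ x) : glue f g c x = f (x - c) := by
  unfold glue
  rw [max_eq_right (by linarith), min_eq_left h, max_eq_left h, min_eq_right (by linarith)]
  ring

lemma glue_of_le_neg_one {f g : ℝ → ℝ} {c x : ℝ} (h : x ≤ -1) : glue f g c x = g (x + c) := by
  unfold glue
  rw [max_eq_left h, min_eq_right (by norm_num), min_eq_left h, max_eq_right (by linarith)]
  ring

namespace Matrix

variable {R : Type*} [Semiring R] {m m' n n' : ℕ}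

def finBlockDiag (A : Matrix (Fin m) (Fin n) R) (B : Matrix (Fin m') (Fin n') R) :
    Matrix (Fin (m + m')) (Fin (n + n')) R :=
  of (Fin.append (fun i => Fin.append (A i) 0) (fun i => Fin.append 0 (B i)))

@[simp]
lemma finBlockDiag_mulVec_castAdd (A : Matrix (Fin m) (Fin n) R) (B : Matrix (Fin m') (Fin n') R)
    (x : Fin (n + n') → R) (i : Fin m) :
    (finBlockDiag A B *ᵥ x) (Fin.castAdd m' i) = (A *ᵥ fun j => x (Fin.castAdd n' j)) i := by
  simp [finBlockDiag, mulVec, dotProduct, Fin.sum_univ_add]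

@[simp]
lemma finBlockDiag_mulVec_natAdd (A : Matrix (Fin m) (Fin n) R) (B : Matrix (Fin m') (Fin n') R)
    (x : Fin (n + n') → R) (i : Fin m') :
    (finBlockDiag A B *ᵥ x) (Fin.natAdd m i) = (B *ᵥ fun j => x (Fin.natAdd n j)) i := by
  simp [finBlockDiag, mulVec, dotProduct, Fin.sum_univ_add]

end Matrix

namespace Layer

open Matrix

variable {d r dL rL dK rK : ℕ}

def preact (L : Layer d r) (G : MPGraph) (χ : Fin G.n → Fin d → ℝ) (v : Fin G.n) : Fin r → ℝ :=
  L.W₁ *ᵥ χ v + L.W₂ *ᵥ ∑ u ∈ G.neighbors v, χ u + L.b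

lemma eval_apply (L : Layer d r) (G : MPGraph) (χ : Fin G.n → Fin d → ℝ) (v : Fin G.n)
    (i : Fin r) : L.eval G χ v i = L.σ (L.preact G χ v i) :=
  rfl

section Bounds

attribute [local instance] Matrix.linftyOpNormedAddCommGroup

lemma exists_abs_preact_le (L : Layer d r) {X : Set (Fin d → ℝ)} (hX : Bornology.IsBounded X)
    (p : ℕ) :
    ∃ M, ∀ G : MPGraph, G.DegreeLE p → ∀ χ : Fin G.n → Fin d → ℝ, (∀ w, χ w ∈ X) →
      ∀ v i, |L.preact G χ v i| ≤ M := by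
  obtain ⟨R, hR⟩ := isBounded_iff_forall_norm_le.mp hX
  refine ⟨‖L.W₁‖ * R + ‖L.W₂‖ * (p * R) + ‖L.b‖, fun G hG χ hχ v i => ?_⟩
  have hR0 : 0 ≤ R := (norm_nonneg _).trans (hR _ (hχ v))
  have hsum : ‖∑ u ∈ G.neighbors v, χ u‖ ≤ p * R :=
    calc ‖∑ u ∈ G.neighbors v, χ u‖ ≤ ∑ _u ∈ G.neighbors v, R :=
          norm_sum_le_of_le _ fun u _ => hR _ (hχ u)
      _ = G.degree v * R := by rw [Finset.sum_const, nsmul_eq_mul, MPGraph.degree]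
      _ ≤ p * R := by gcongr; exact_mod_cast hG v
  calc |L.preact G χ v i| ≤ ‖L.preact G χ v‖ := norm_le_pi_norm (L.preact G χ v) i
    _ ≤ ‖L.W₁ *ᵥ χ v‖ + ‖L.W₂ *ᵥ ∑ u ∈ G.neighbors v, χ u‖ + ‖L.b‖ := norm_add₃_le
    _ ≤ ‖L.W₁‖ * R + ‖L.W₂‖ * (p * R) + ‖L.b‖ := by
      gcongr
      · exact (Matrix.linfty_opNorm_mulVec _ _).trans (by gcongr; exact hR _ (hχ v))
      · exact (Matrix.linfty_opNorm_mulVec _ _).trans (by gcongr)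

end Bounds

noncomputable def parallel (L : Layer dL rL) (K : Layer dK rK) (c : ℝ) :
    Layer (dL + dK) (rL + rK) where
  W₁ := Matrix.finBlockDiag L.W₁ K.W₁
  W₂ := Matrix.finBlockDiag L.W₂ K.W₂
  b := Fin.append (L.b + fun _ => c) (K.b - fun _ => c)
  σ := glue L.σ K.σ c
  hσ := continuous_glue L.hσ K.hσ c

variable (L : Layer dL rL) (K : Layer dK rK) (c : ℝ) (G : MPGraph)
  (χ : Fin G.n → Fin (dL + dK) → ℝ) (v : Fin G.n)

lemma preact_parallel_castAdd (i : Fin rL) :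
    (L.parallel K c).preact G χ v (Fin.castAdd rK i) =
      L.preact G (fun w j => χ w (Fin.castAdd dK j)) v i + c := by
  simp [preact, parallel, Finset.sum_fn, add_assoc]

lemma preact_parallel_natAdd (i : Fin rK) :
    (L.parallel K c).preact G χ v (Fin.natAdd rL i) =
      K.preact G (fun w j => χ w (Fin.natAdd dL j)) v i - c := by
  simp [preact, parallel, Finset.sum_fn, add_sub_assoc]

lemma eval_parallel
    (hL : ∀ i, 1 - c ≤ L.preact G (fun w j => χ w (Fin.castAdd dK j)) v i)
    (hK : ∀ i, K.preact G (fun w j => χ w (Fin.natAdd dL j)) v i ≤ c - 1) :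
    (L.parallel K c).eval G χ v =
      Fin.append (L.eval G (fun w j => χ w (Fin.castAdd dK j)) v)
        (K.eval G (fun w j => χ w (Fin.natAdd dL j)) v) := by
  funext i
  refine Fin.addCases (fun i => ?_) (fun i => ?_) i
  · have h : 1 ≤ (L.parallel K c).preact G χ v (Fin.castAdd rK i) := by
      rw [preact_parallel_castAdd]; linarith [hL i]
    rw [eval_apply, Fin.append_left, eval_apply]
    exact (glue_of_one_le h).trans (by rw [preact_parallel_castAdd, add_sub_cancel_right])
  · have h : (L.parallel K c).preact G χ v (Fin.natAdd rL i) ≤ -1 := by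
      rw [preact_parallel_natAdd]; linarith [hK i]
    rw [eval_apply, Fin.append_right, eval_apply]
    exact (glue_of_le_neg_one h).trans (by rw [preact_parallel_natAdd, sub_add_cancel])

end Layer

/-- Lemma 5 of the paper: for layers `L`, `K`, bounded sets
`X_L`, `X_K`, and degree bound `p`, there is a single MPNN layer equivalent to
the parallel composition `L ∥ K` over `𝔾_p` and `X = X_L × X_K`. -/
theorem layer_parallel_bounded (dL rL dK rK p : ℕ)
    (L : Layer dL rL) (K : Layer dK rK)
    (XL : Set (Fin dL → ℝ)) (XK : Set (Fin dK → ℝ))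
    (hXL : Bornology.IsBounded XL) (hXK : Bornology.IsBounded XK) :
    ∃ J : Layer (dL + dK) (rL + rK),
      ∀ (G : MPGraph), G.DegreeLE p →
        ∀ χ : Fin G.n → Fin (dL + dK) → ℝ,
          (∀ v, (fun i => χ v (Fin.castAdd dK i)) ∈ XL ∧
                (fun i => χ v (Fin.natAdd dL i)) ∈ XK) →
          ∀ v, J.eval G χ v =
            Fin.append (L.eval G (fun w i => χ w (Fin.castAdd dK i)) v)
              (K.eval G (fun w i => χ w (Fin.natAdd dL i)) v) := by
  obtain ⟨ML, hML⟩ := L.exists_abs_preact_le hXL p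
  obtain ⟨MK, hMK⟩ := K.exists_abs_preact_le hXK p
  refine ⟨L.parallel K (max ML MK + 1), fun G hG χ hχ v => L.eval_parallel K _ G χ v ?_ ?_⟩
  · intro i
    have := (abs_le.mp (hML G hG _ (fun w => (hχ w).1) v i)).1
    linarith [le_max_left ML MK]
  · intro i
    have := (abs_le.mp (hMK G hG _ (fun w => (hχ w).2) v i)).2
    linarith [le_max_right ML MK]
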